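/- For any probability measure μ on ℝ, one has (∫ (|x| − 1)² dμ(x))^{1/2} ≤ (∫ (x² − 1)² dμ(x))^{1/2}. In particular, if μ is symmetric, then W₂(μ, b) ≤ D*(μ|b), where b is the Rademacher law and D*(μ|b) := (∫(x²−1)²dμ)^{1/2}. -/

import Mathlib

open MeasureTheory Real
open scoped ENNReal

/-!
Since `x² - 1 = (|x| - 1)(|x| + 1)` and `|x| + 1 ≥ 1`, the cost `(|x| - 1)²` is pointwise below
`(x² - 1)²`. For symmetric `μ`, it is exactly the cost of transporting `μ` to the Rademacher law by
moving each point to the nearest of `±1`, sending the atom at `0` half to each side.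
-/

/-- The Rademacher (symmetric Bernoulli) distribution `b = (1/2)δ₋₁ + (1/2)δ₁`. -/
noncomputable def rademacher : Measure ℝ :=
  (1/2 : ℝ≥0∞) • Measure.dirac (-1) + (1/2 : ℝ≥0∞) • Measure.dirac 1

/-- The squared 2-Wasserstein distance between two measures on ℝ, as the infimum
of the quadratic transport cost over all couplings. -/
noncomputable def W2sq (μ ν : Measure ℝ) : ℝ≥0∞ :=
  ⨅ (pi : Measure (ℝ × ℝ)) (_ : pi.map Prod.fst = μ) (_ : pi.map Prod.snd = ν),
    ∫⁻ p, ENNReal.ofReal ((p.1 - p.2) ^ 2) ∂pi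

lemma sq_abs_sub_one_le_sq_sq_sub_one (x : ℝ) : (|x| - 1) ^ 2 ≤ (x ^ 2 - 1) ^ 2 := by
  have hfactor : (x ^ 2 - 1) ^ 2 = (|x| - 1) ^ 2 * (|x| + 1) ^ 2 := by
    rw [← sq_abs x]; ring
  rw [hfactor]
  exact le_mul_of_one_le_right (sq_nonneg _) (by nlinarith [abs_nonneg x])

lemma W2sq_le_of_map_fst_of_map_snd {μ ν : Measure ℝ} (ρ : Measure (ℝ × ℝ))
    (hfst : ρ.map Prod.fst = μ) (hsnd : ρ.map Prod.snd = ν) :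
    W2sq μ ν ≤ ∫⁻ p, ENNReal.ofReal ((p.1 - p.2) ^ 2) ∂ρ :=
  iInf₂_le_of_le ρ hfst (iInf_le _ hsnd)

lemma MeasureTheory.Measure.map_ite_const {α β : Type*} [MeasurableSpace α] [MeasurableSpace β]
    (μ : Measure α) {S : Set α} [DecidablePred (· ∈ S)] (hS : MeasurableSet S) (a b : β) :
    μ.map (fun x => if x ∈ S then a else b) = μ S • Measure.dirac a + μ Sᶜ • Measure.dirac b := by
  have hf : Measurable fun x => if x ∈ S then a else b :=
    Measurable.ite hS measurable_const measurable_const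
  conv_lhs => rw [← Measure.restrict_add_restrict_compl (μ := μ) hS]
  rw [Measure.map_add _ _ hf,
    Measure.map_congr (g := fun _ => a) ((ae_restrict_mem hS).mono fun x hx => if_pos hx),
    Measure.map_congr (g := fun _ => b) ((ae_restrict_mem hS.compl).mono fun x hx => if_neg hx),
    Measure.map_const, Measure.map_const, Measure.restrict_apply_univ,
    Measure.restrict_apply_univ]

noncomputable def unitSign (x : ℝ) : ℝ := if x ∈ Set.Ici 0 then 1 else -1

lemma measurable_unitSign : Measurable unitSign :=
  Measurable.ite measurableSet_Ici measurable_const measurable_const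

lemma measurable_prodMk_unitSign : Measurable fun x : ℝ => (x, unitSign x) :=
  measurable_id.prodMk measurable_unitSign

lemma sq_sub_unitSign (x : ℝ) : (x - unitSign x) ^ 2 = (|x| - 1) ^ 2 := by
  rcases le_or_gt 0 x with hx | hx
  · rw [unitSign, if_pos (Set.mem_Ici.mpr hx), abs_of_nonneg hx]
  · rw [unitSign, if_neg (Set.notMem_Ici.mpr hx), abs_of_neg hx]; ring

lemma map_unitSign (μ : Measure ℝ) :
    μ.map unitSign = μ (Set.Ici 0) • Measure.dirac 1 + μ (Set.Ici 0)ᶜ • Measure.dirac (-1) :=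
  Measure.map_ite_const μ measurableSet_Ici 1 (-1)

lemma half_smul_map_unitSign_add_map_neg (μ : Measure ℝ) [IsProbabilityMeasure μ] :
    (1/2 : ℝ≥0∞) • (μ.map unitSign + (μ.map unitSign).map (fun y => -y)) = rademacher := by
  set p := μ (Set.Ici 0)
  set q := μ (Set.Ici 0)ᶜ
  have htotal : p + q = 1 := by
    rw [measure_add_measure_compl measurableSet_Ici, measure_univ]
  rw [map_unitSign, Measure.map_add _ _ measurable_neg,
    Measure.map_smul, Measure.map_smul, Measure.map_dirac' measurable_neg,
    Measure.map_dirac' measurable_neg, neg_neg, rademacher]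
  calc (1/2 : ℝ≥0∞) • (p • Measure.dirac (1 : ℝ) + q • Measure.dirac (-1)
          + (p • Measure.dirac (-1) + q • Measure.dirac 1))
      = (1/2 : ℝ≥0∞) • ((p + q) • Measure.dirac (-1) + (p + q) • Measure.dirac (1 : ℝ)) := by
        congr 1; rw [add_smul, add_smul]; abel
    _ = _ := by rw [htotal, one_smul, one_smul, smul_add]

/-- Symmetrizing under `(x, y) ↦ (-x, -y)` makes the second marginal Rademacher whatever mass
`μ` gives to `[0, ∞)`, and keeps the first marginal `μ` when `μ` is symmetric. -/
noncomputable def signCoupling (μ : Measure ℝ) : Measure (ℝ × ℝ) :=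
  (1/2 : ℝ≥0∞) • (μ.map (fun x => (x, unitSign x))
    + (μ.map (fun x => (x, unitSign x))).map (fun p => -p))

section signCoupling

variable (μ : Measure ℝ)

lemma map_fst_signCoupling (hsym : μ.map (fun x => -x) = μ) :
    (signCoupling μ).map Prod.fst = μ := by
  have hneg : (Prod.fst ∘ fun p : ℝ × ℝ => -p) = (fun x => -x) ∘ Prod.fst := rfl
  rw [signCoupling, Measure.map_smul, Measure.map_add _ _ measurable_fst,
    Measure.map_map measurable_fst measurable_neg, hneg,
    ← Measure.map_map measurable_neg measurable_fst,
    Measure.map_map measurable_fst measurable_prodMk_unitSign]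
  change (1/2 : ℝ≥0∞) • (μ.map id + (μ.map id).map (fun x => -x)) = μ
  rw [Measure.map_id, hsym, ← two_smul ℝ≥0∞, smul_smul, one_div,
    ENNReal.inv_mul_cancel two_ne_zero ENNReal.ofNat_ne_top, one_smul]

lemma map_snd_signCoupling [IsProbabilityMeasure μ] :
    (signCoupling μ).map Prod.snd = rademacher := by
  have hneg : (Prod.snd ∘ fun p : ℝ × ℝ => -p) = (fun y => -y) ∘ Prod.snd := rfl
  rw [signCoupling, Measure.map_smul, Measure.map_add _ _ measurable_snd,
    Measure.map_map measurable_snd measurable_neg, hneg,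
    ← Measure.map_map measurable_neg measurable_snd,
    Measure.map_map measurable_snd measurable_prodMk_unitSign]
  exact half_smul_map_unitSign_add_map_neg μ

lemma lintegral_sq_sub_signCoupling :
    ∫⁻ p, ENNReal.ofReal ((p.1 - p.2) ^ 2) ∂(signCoupling μ) =
      ∫⁻ x, ENNReal.ofReal ((|x| - 1) ^ 2) ∂μ := by
  have hcost : Measurable fun p : ℝ × ℝ => ENNReal.ofReal ((p.1 - p.2) ^ 2) := by fun_prop
  have hcost_neg : ∀ p : ℝ × ℝ, ((-p).1 - (-p).2) ^ 2 = (p.1 - p.2) ^ 2 := fun p => by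
    simp only [Prod.fst_neg, Prod.snd_neg]; ring
  rw [signCoupling, lintegral_smul_measure, lintegral_add_measure,
    lintegral_map hcost measurable_neg]
  simp only [hcost_neg]
  rw [lintegral_map hcost measurable_prodMk_unitSign]
  simp only [sq_sub_unitSign]
  rw [← two_mul, smul_eq_mul, ← mul_assoc, one_div,
    ENNReal.inv_mul_cancel two_ne_zero ENNReal.ofNat_ne_top, one_mul]

end signCoupling

/-- Boolean WS inequality: for any probability measure `μ` on ℝ,
`(∫(|x|−1)²dμ)^{1/2} ≤ (∫(x²−1)²dμ)^{1/2}`, and if `μ` is symmetric then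
`W₂(μ,b) ≤ D*(μ|b)`. -/
theorem boolean_WS (μ : Measure ℝ) [IsProbabilityMeasure μ] :
    (∫⁻ x, ENNReal.ofReal ((|x| - 1) ^ 2) ∂μ) ^ (1/2 : ℝ) ≤
      (∫⁻ x, ENNReal.ofReal ((x ^ 2 - 1) ^ 2) ∂μ) ^ (1/2 : ℝ) ∧
    (μ.map (fun x => -x) = μ →
      (W2sq μ rademacher) ^ (1/2 : ℝ) ≤
        (∫⁻ x, ENNReal.ofReal ((x ^ 2 - 1) ^ 2) ∂μ) ^ (1/2 : ℝ)) := by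
  have hmono : ∫⁻ x, ENNReal.ofReal ((|x| - 1) ^ 2) ∂μ ≤
      ∫⁻ x, ENNReal.ofReal ((x ^ 2 - 1) ^ 2) ∂μ :=
    lintegral_mono fun x => ENNReal.ofReal_le_ofReal (sq_abs_sub_one_le_sq_sq_sub_one x)
  refine ⟨ENNReal.rpow_le_rpow hmono (by norm_num), fun hsym => ?_⟩
  refine ENNReal.rpow_le_rpow ?_ (by norm_num)
  calc W2sq μ rademacher
      ≤ ∫⁻ p, ENNReal.ofReal ((p.1 - p.2) ^ 2) ∂(signCoupling μ) :=
        W2sq_le_of_map_fst_of_map_snd _ (map_fst_signCoupling μ hsym) (map_snd_signCoupling μ)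
    _ = ∫⁻ x, ENNReal.ofReal ((|x| - 1) ^ 2) ∂μ := lintegral_sq_sub_signCoupling μ
    _ ≤ _ := hmono
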